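/- For every integer d ≥ 2 and every i ∈ [d], the graph obtained from the CFI gadget X_d by deleting the vertex a_i is isomorphic to the graph obtained from X_d by deleting the vertex b_i. -/

import Mathlib

open scoped symmDiff

inductive CFIVertex (d : ℕ) : Type where
  | a : Fin d → CFIVertex d
  | b : Fin d → CFIVertex d
  | m : {S : Finset (Fin d) // Even S.card} → CFIVertex d

def CFIAdj (d : ℕ) : CFIVertex d → CFIVertex d → Prop
  | .m S, .a i => i ∈ S.1
  | .a i, .m S => i ∈ S.1
  | .m S, .b i => i ∉ S.1
  | .b i, .m S => i ∉ S.1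
  | _, _ => False

def CFI (d : ℕ) : SimpleGraph (CFIVertex d) where
  Adj := CFIAdj d
  symm := by
    constructor
    intro x y h
    cases x <;> cases y <;> exact h
  loopless := by
    constructor
    intro x
    cases x <;> exact fun h => h

lemma even_card_symmDiff {α : Type*} [DecidableEq α] {S T : Finset α}
    (hS : Even S.card) (hT : Even T.card) : Even ((T ∆ S).card) := by
  have h0 : (T ∆ S).card = (T \ S).card + (S \ T).card := by
    rw [symmDiff_def]
    exact Finset.card_union_of_disjoint disjoint_sdiff_sdiff
  have h1 : (T \ S).card + (T ∩ S).card = T.card := Finset.card_sdiff_add_card_inter T S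
  have h2 : (S \ T).card + (S ∩ T).card = S.card := Finset.card_sdiff_add_card_inter S T
  have h3 : (T ∩ S).card = (S ∩ T).card := by rw [Finset.inter_comm]
  rw [Nat.even_iff] at *
  omega

def sigmaS (d : ℕ) (S : Finset (Fin d)) (hS : Even S.card) : CFIVertex d → CFIVertex d
  | .a i => if i ∈ S then .b i else .a i
  | .b i => if i ∈ S then .a i else .b i
  | .m T => .m ⟨T.1 ∆ S, even_card_symmDiff hS T.2⟩

lemma sigmaS_invol (d : ℕ) (S : Finset (Fin d)) (hS : Even S.card) :
    Function.Involutive (sigmaS d S hS) := by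
  intro x
  cases x with
  | a i =>
    by_cases h : i ∈ S <;> simp [sigmaS, h]
  | b i =>
    by_cases h : i ∈ S <;> simp [sigmaS, h]
  | m T =>
    simp only [sigmaS]
    congr 1
    ext
    simp [symmDiff_symmDiff_cancel_right]

lemma sigmaS_adj (d : ℕ) (S : Finset (Fin d)) (hS : Even S.card) (x y : CFIVertex d) :
    (CFI d).Adj (sigmaS d S hS x) (sigmaS d S hS y) ↔ (CFI d).Adj x y := by
  have key : ∀ (k : Fin d) (T : {S : Finset (Fin d) // Even S.card}),
      ((CFI d).Adj (sigmaS d S hS (.a k)) (sigmaS d S hS (.m T)) ↔ (CFI d).Adj (.a k) (.m T))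
      ∧ ((CFI d).Adj (sigmaS d S hS (.b k)) (sigmaS d S hS (.m T)) ↔ (CFI d).Adj (.b k) (.m T)) := by
    intro k T
    by_cases hk : k ∈ S <;>
      simp [sigmaS, hk, CFI, CFIAdj, Finset.mem_symmDiff] <;> tauto
  have symm : ∀ u v, (CFI d).Adj u v ↔ (CFI d).Adj v u :=
    fun u v => ⟨fun h => (CFI d).adj_symm h, fun h => (CFI d).adj_symm h⟩
  cases x with
  | a k =>
    cases y with
    | a l => by_cases hk : k ∈ S <;> by_cases hl : l ∈ S <;> simp [sigmaS, hk, hl, CFI, CFIAdj]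
    | b l => by_cases hk : k ∈ S <;> by_cases hl : l ∈ S <;> simp [sigmaS, hk, hl, CFI, CFIAdj]
    | m T => exact (key k T).1
  | b k =>
    cases y with
    | a l => by_cases hk : k ∈ S <;> by_cases hl : l ∈ S <;> simp [sigmaS, hk, hl, CFI, CFIAdj]
    | b l => by_cases hk : k ∈ S <;> by_cases hl : l ∈ S <;> simp [sigmaS, hk, hl, CFI, CFIAdj]
    | m T => exact (key k T).2
  | m T =>
    cases y with
    | a l => rw [symm, symm (.m T)]; exact (key l T).1
    | b l => rw [symm, symm (.m T)]; exact (key l T).2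
    | m U => simp [sigmaS, CFI, CFIAdj]

/-- For every integer d ≥ 2 and every i ∈ [d], the graph obtained from
the CFI gadget X_d by deleting the vertex a_i is isomorphic to the graph obtained
from X_d by deleting the vertex b_i. -/
theorem cfi_delete_a_iso_delete_b (d : ℕ) (hd : 2 ≤ d) (i : Fin d) :
    Nonempty ((CFI d).induce {x : CFIVertex d | x ≠ CFIVertex.a i}
      ≃g (CFI d).induce {x : CFIVertex d | x ≠ CFIVertex.b i}) := by
  haveI : Nontrivial (Fin d) := Fin.nontrivial_iff_two_le.mpr hd
  obtain ⟨j, hj⟩ := exists_ne i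
  have hS : Even (({i, j} : Finset (Fin d)).card) := by
    rw [Finset.card_insert_of_notMem (by simpa using hj.symm)]
    simp
  have hiS : i ∈ ({i, j} : Finset (Fin d)) := by simp
  have hinv := sigmaS_invol d {i, j} hS
  have hσa : sigmaS d {i, j} hS (CFIVertex.a i) = CFIVertex.b i := by simp [sigmaS, hiS]
  have hσb : sigmaS d {i, j} hS (CFIVertex.b i) = CFIVertex.a i := by simp [sigmaS, hiS]
  refine ⟨⟨⟨fun x => ⟨sigmaS d {i, j} hS x.1, ?_⟩, fun x => ⟨sigmaS d {i, j} hS x.1, ?_⟩, ?_, ?_⟩, ?_⟩⟩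
  · intro h
    apply x.2
    have := congrArg (sigmaS d {i, j} hS) h
    rw [hinv x.1, hσb] at this
    exact this
  · intro h
    apply x.2
    have := congrArg (sigmaS d {i, j} hS) h
    rw [hinv x.1, hσa] at this
    exact this
  · intro x; ext1; exact hinv x.1
  · intro x; ext1; exact hinv x.1
  · intro x y
    simpa using sigmaS_adj d {i, j} hS x.1 y.1
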